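/- arXiv:2208.11093 — 2 statements merged into one kernel-verified Lean document; each statement's English description precedes it below -/
import Mathlib

section
/- For x > 0 and p, k > 0, the p-k Nielsen beta function admits the series representation ₚβₖ(x) = (p/k) Σ_{n=0}^∞ (k/(2nk + x) − k/(2nk + x + k)). -/
/-!
For `0 < t < 1`, `t ^ (a - 1) / (1 + t) = ∑ₙ (t ^ (2n + a - 1) - t ^ (2n + a))`, a geometric
series in `t²` whose terms are nonnegative, so it may be integrated term by term over `[0, 1]`.
Since `∫₀¹ (t ^ (b - 1) - t ^ b) dt = 1 / b - 1 / (b + 1)`, this gives the series with `a = x / k`.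
-/

open Real

noncomputable def pkBeta (p k x : ℝ) : ℝ :=
  (p / k) * ∫ t in (0:ℝ)..1, t ^ (x / k - 1) / (1 + t)

open MeasureTheory Set
open scoped Interval

-- Dominated convergence, with the series itself as the dominating function.
theorem intervalIntegral.hasSum_integral_of_nonneg {F : ℕ → ℝ → ℝ} {f : ℝ → ℝ} {a b : ℝ}
    (hab : a ≤ b) (hF : ∀ n, IntervalIntegrable (F n) volume a b)
    (hF_nonneg : ∀ n, ∀ t ∈ Ioo a b, 0 ≤ F n t) (hf : IntervalIntegrable f volume a b)
    (h_lim : ∀ t ∈ Ioo a b, HasSum (F · t) (f t)) :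
    HasSum (fun n => ∫ t in a..b, F n t) (∫ t in a..b, f t) := by
  have h_ae : ∀ᵐ t, t ∈ Ι a b → t ∈ Ioo a b := by
    filter_upwards [Measure.ae_ne volume b] with t htb ht
    rw [uIoc_of_le hab] at ht
    exact ⟨ht.1, lt_of_le_of_ne ht.2 htb⟩
  refine intervalIntegral.hasSum_integral_of_dominated_convergence F
    (fun n => (hF n).def'.aestronglyMeasurable) (fun n => ?_) ?_ ?_ ?_
  · filter_upwards [h_ae] with t ht ht'
    exact (norm_of_nonneg (hF_nonneg n t (ht ht'))).le
  · filter_upwards [h_ae] with t ht ht'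
    exact (h_lim t (ht ht')).summable
  · refine hf.congr_ae ?_
    filter_upwards [(ae_restrict_iff' measurableSet_uIoc).mpr h_ae] with t ht
    exact (h_lim t ht).tsum_eq.symm
  · filter_upwards [h_ae] with t ht ht'
    exact h_lim t (ht ht')

theorem integral_rpow_sub_one_sub_rpow {b : ℝ} (hb : 0 < b) :
    ∫ t in (0:ℝ)..1, (t ^ (b - 1) - t ^ b) = 1 / b - 1 / (b + 1) := by
  rw [intervalIntegral.integral_sub (intervalIntegral.intervalIntegrable_rpow' (by linarith))
      (intervalIntegral.intervalIntegrable_rpow' (by linarith)),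
    integral_rpow (Or.inl (by linarith)), integral_rpow (Or.inl (by linarith)),
    one_rpow, one_rpow, zero_rpow (by linarith), zero_rpow (by linarith), sub_add_cancel]
  ring

theorem rpow_sub_one_sub_rpow_nonneg {b t : ℝ} (ht : t ∈ Ioo (0:ℝ) 1) : 0 ≤ t ^ (b - 1) - t ^ b :=
  sub_nonneg.mpr (rpow_le_rpow_of_exponent_ge ht.1 ht.2.le (by linarith))

theorem hasSum_rpow_div_one_add {a t : ℝ} (ht : t ∈ Ioo (0:ℝ) 1) :
    HasSum (fun n : ℕ => t ^ (2 * n + a - 1) - t ^ (2 * n + a)) (t ^ (a - 1) / (1 + t)) := by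
  obtain ⟨ht0, ht1⟩ := ht
  have hterm : ∀ n : ℕ, t ^ (2 * n + a - 1) - t ^ (2 * n + a)
      = (t ^ 2) ^ n * (t ^ (a - 1) * (1 - t)) := by
    intro n
    rw [show 2 * (n : ℝ) + a - 1 = ((2 * n : ℕ) : ℝ) + (a - 1) by push_cast; ring,
      show 2 * (n : ℝ) + a = ((2 * n : ℕ) : ℝ) + (a - 1) + 1 by push_cast; ring,
      rpow_add ht0, rpow_add ht0, rpow_add ht0, rpow_natCast, rpow_one, pow_mul]
    ring
  have hsq : t ^ 2 < 1 := by nlinarith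
  have hsum : t ^ (a - 1) / (1 + t) = (1 - t ^ 2)⁻¹ * (t ^ (a - 1) * (1 - t)) := by
    have : 1 - t ^ 2 ≠ 0 := (sub_pos.mpr hsq).ne'
    field_simp
    ring
  rw [hsum, funext hterm]
  exact (hasSum_geometric_of_lt_one (by positivity) hsq).mul_right _

theorem intervalIntegrable_rpow_div_one_add {a : ℝ} (ha : 0 < a) :
    IntervalIntegrable (fun t => t ^ (a - 1) / (1 + t)) volume 0 1 := by
  simp only [div_eq_mul_inv]
  refine (intervalIntegral.intervalIntegrable_rpow' (by linarith)).mul_continuousOn ?_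
  refine (continuousOn_const.add continuousOn_id).inv₀ fun t ht => ?_
  rw [uIcc_of_le zero_le_one] at ht
  exact (by linarith [ht.1] : (1:ℝ) + t ≠ 0)

theorem hasSum_integral_rpow_div_one_add {a : ℝ} (ha : 0 < a) :
    HasSum (fun n : ℕ => 1 / (2 * n + a) - 1 / (2 * n + a + 1))
      (∫ t in (0:ℝ)..1, t ^ (a - 1) / (1 + t)) := by
  have hpos : ∀ n : ℕ, 0 < 2 * (n : ℝ) + a := fun n => by positivity
  convert intervalIntegral.hasSum_integral_of_nonneg zero_le_one
    (fun n => (intervalIntegral.intervalIntegrable_rpow' (by linarith [hpos n])).sub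
      (intervalIntegral.intervalIntegrable_rpow' (by linarith [hpos n])))
    (fun n t ht => rpow_sub_one_sub_rpow_nonneg ht) (intervalIntegrable_rpow_div_one_add ha)
    (fun t ht => hasSum_rpow_div_one_add ht) using 1
  exact funext fun n => (integral_rpow_sub_one_sub_rpow (hpos n)).symm

theorem pkBeta_series_general (p k x : ℝ) (hk : 0 < k) (hx : 0 < x) :
    pkBeta p k x =
      (p / k) * ∑' n : ℕ,
        (k / (2 * (n : ℝ) * k + x) - k / (2 * (n : ℝ) * k + x + k)) := by
  rw [pkBeta, (hasSum_integral_rpow_div_one_add (div_pos hx hk)).tsum_eq.symm]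
  congr 1
  refine tsum_congr fun n => ?_
  field_simp

theorem pkBeta_series (p k x : ℝ) (hp : 0 < p) (hk : 0 < k) (hx : 0 < x) :
    pkBeta p k x =
      (p / k) * ∑' n : ℕ,
        (k / (2 * (n : ℝ) * k + x) - k / (2 * (n : ℝ) * k + x + k)) :=
  pkBeta_series_general p k x hk hx
end

section
/- Let c, p, k > 0, α, β ∈ (0,1) with α + β = 1, and let m, n be even nonnegative integers. Then for x, y > 0, the derivatives of the extended Chaudhry-Zubair gamma function satisfy Γ_{CZ:(c,p,k)}^{(αm+βn)}(αx + βy) ≤ [Γ_{CZ:(c,p,k)}^{(m)}(x)]^α · [Γ_{CZ:(c,p,k)}^{(n)}(y)]^β, provided αm + βn is an integer. -/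
/-!
Let `F_{M,z}(t) = |log t|^M t^(z-1) exp(-t^k/p - cp/t^k)`. For even `M` the integral of `F_{M,z}`
is `Γ^{(M)}(z)`, and `Γ^{(N)}(w)` is always bounded by the integral of `F_{N,w}`. Since
`F_{M,z}(t)` is log-linear in `(M, z)`, we have `F_{αm+βn, αx+βy} = F_{m,x}^α F_{n,y}^β`, and the
inequality is Hölder's inequality with exponents `1/α`, `1/β`. Integrability of `F_{M,z}` comes
from `|log t|^M ≤ M!/δ^M (t^δ + t^(-δ))` with `δ = z/2`.
-/

open MeasureTheory Real

noncomputable def czDeriv (c p k : ℝ) (n : ℕ) (x : ℝ) : ℝ :=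
  ∫ t in Set.Ioi (0:ℝ),
    (Real.log t) ^ n * t ^ (x - 1) * Real.exp (-(t ^ k) / p - c * p / t ^ k)

open Set

theorem integral_rpow_mul_rpow_le {α : Type*} [MeasurableSpace α] {μ : Measure α} {f g : α → ℝ}
    (hf0 : 0 ≤ᵐ[μ] f) (hg0 : 0 ≤ᵐ[μ] g) (hf : Integrable f μ) (hg : Integrable g μ)
    {p q : ℝ} (hp : 0 ≤ p) (hq : 0 ≤ q) (hpq : p + q = 1) :
    ∫ a, f a ^ p * g a ^ q ∂μ ≤ (∫ a, f a ∂μ) ^ p * (∫ a, g a ∂μ) ^ q := by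
  have hfg0 : 0 ≤ᵐ[μ] fun a => f a ^ p * g a ^ q := by
    filter_upwards [hf0, hg0] with a hfa hga
    exact mul_nonneg (rpow_nonneg hfa p) (rpow_nonneg hga q)
  have hfg_meas : AEStronglyMeasurable (fun a => f a ^ p * g a ^ q) μ :=
    ((hf.aemeasurable.pow_const p).mul (hg.aemeasurable.pow_const q)).aestronglyMeasurable
  have hofReal : (fun a => ENNReal.ofReal (f a ^ p * g a ^ q)) =ᵐ[μ]
      fun a => ENNReal.ofReal (f a) ^ p * ENNReal.ofReal (g a) ^ q := by
    filter_upwards [hf0, hg0] with a hfa hga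
    rw [ENNReal.ofReal_mul (rpow_nonneg hfa p), ENNReal.ofReal_rpow_of_nonneg hfa hp,
      ENNReal.ofReal_rpow_of_nonneg hga hq]
  have hholder := ENNReal.lintegral_mul_norm_pow_le hf.aemeasurable.ennreal_ofReal
    hg.aemeasurable.ennreal_ofReal hp hq hpq
  rw [integral_eq_lintegral_of_nonneg_ae hfg0 hfg_meas,
    integral_eq_lintegral_of_nonneg_ae hf0 hf.aestronglyMeasurable,
    integral_eq_lintegral_of_nonneg_ae hg0 hg.aestronglyMeasurable,
    ENNReal.toReal_rpow, ENNReal.toReal_rpow, ← ENNReal.toReal_mul, lintegral_congr_ae hofReal]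
  refine ENNReal.toReal_mono (ENNReal.mul_ne_top ?_ ?_) hholder
  · exact ENNReal.rpow_ne_top_of_nonneg hp hf.lintegral_lt_top.ne
  · exact ENNReal.rpow_ne_top_of_nonneg hq hg.lintegral_lt_top.ne

lemma abs_log_pow_le {t δ : ℝ} (ht : 0 < t) (hδ : 0 < δ) (M : ℕ) :
    |log t| ^ M ≤ M.factorial / δ ^ M * (t ^ δ + t ^ (-δ)) := by
  have key : (δ * |log t|) ^ M / M.factorial ≤ t ^ δ + t ^ (-δ) := by
    calc (δ * |log t|) ^ M / M.factorial ≤ exp (δ * |log t|) :=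
          pow_div_factorial_le_exp _ (by positivity) M
      _ = exp |δ * log t| := by rw [abs_mul, abs_of_pos hδ]
      _ ≤ exp (δ * log t) + exp (-(δ * log t)) := exp_abs_le _
      _ = t ^ δ + t ^ (-δ) := by
          rw [rpow_def_of_pos ht, rpow_def_of_pos ht, mul_neg, mul_comm]
  rw [mul_pow, div_le_iff₀ (by positivity)] at key
  rw [div_mul_eq_mul_div, le_div_iff₀ (by positivity)]
  linarith

noncomputable def czAbsIntegrand (c p k : ℝ) (M : ℕ) (z t : ℝ) : ℝ :=
  |log t| ^ M * t ^ (z - 1) * exp (-(t ^ k) / p - c * p / t ^ k)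

lemma czAbsIntegrand_nonneg (c p k : ℝ) (M : ℕ) (z : ℝ) {t : ℝ} (ht : 0 ≤ t) :
    0 ≤ czAbsIntegrand c p k M z t := by
  unfold czAbsIntegrand
  positivity

lemma continuousOn_czAbsIntegrand (c p k : ℝ) (M : ℕ) (z : ℝ) :
    ContinuousOn (czAbsIntegrand c p k M z) (Ioi 0) := by
  intro t ht
  have ht0 : t ≠ 0 := (mem_Ioi.mp ht).ne'
  have htk : t ^ k ≠ 0 := (rpow_pos_of_pos (mem_Ioi.mp ht) k).ne'
  apply ContinuousAt.continuousWithinAt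
  unfold czAbsIntegrand
  fun_prop (disch := first | assumption | exact Or.inl ht0)

lemma czAbsIntegrand_le {c p k δ t : ℝ} (hc : 0 ≤ c) (hp : 0 < p) (hδ : 0 < δ) (ht : 0 < t)
    (M : ℕ) (z : ℝ) :
    czAbsIntegrand c p k M z t ≤ M.factorial / δ ^ M *
      (t ^ (z - 1 + δ) * exp (-p⁻¹ * t ^ k) + t ^ (z - 1 - δ) * exp (-p⁻¹ * t ^ k)) := by
  have hexp : exp (-(t ^ k) / p - c * p / t ^ k) ≤ exp (-p⁻¹ * t ^ k) := by
    have : 0 ≤ c * p / t ^ k := by positivity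
    gcongr
    rw [neg_div, neg_mul, inv_mul_eq_div]
    linarith
  calc czAbsIntegrand c p k M z t
      ≤ M.factorial / δ ^ M * (t ^ δ + t ^ (-δ)) * t ^ (z - 1) * exp (-p⁻¹ * t ^ k) := by
        unfold czAbsIntegrand
        gcongr
        exact abs_log_pow_le ht hδ M
    _ = _ := by
        rw [sub_eq_add_neg (z - 1), rpow_add ht, rpow_add ht]
        ring

lemma integrableOn_czAbsIntegrand {c p k z : ℝ} (hc : 0 ≤ c) (hp : 0 < p) (hk : 0 < k)
    (hz : 0 < z) (M : ℕ) : IntegrableOn (czAbsIntegrand c p k M z) (Ioi 0) := by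
  have hδ : 0 < z / 2 := half_pos hz
  have hdom : IntegrableOn (fun t => M.factorial / (z / 2) ^ M *
      (t ^ (z - 1 + z / 2) * exp (-p⁻¹ * t ^ k) + t ^ (z - 1 - z / 2) * exp (-p⁻¹ * t ^ k)))
      (Ioi 0) :=
    ((integrableOn_rpow_mul_exp_neg_mul_rpow (by linarith) hk (inv_pos.2 hp)).add
      (integrableOn_rpow_mul_exp_neg_mul_rpow (by linarith) hk (inv_pos.2 hp))).const_mul _
  refine hdom.mono'
    ((continuousOn_czAbsIntegrand c p k M z).aestronglyMeasurable measurableSet_Ioi) ?_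
  filter_upwards [ae_restrict_mem measurableSet_Ioi] with t ht
  rw [norm_of_nonneg (czAbsIntegrand_nonneg c p k M z (le_of_lt ht))]
  exact czAbsIntegrand_le hc hp hδ ht M z

lemma czAbsIntegrand_rpow_mul_rpow (c p k : ℝ) {α β : ℝ} (hα : 0 ≤ α) (hβ : 0 ≤ β)
    (hαβ : α + β = 1) {m n N : ℕ} (hN : (N : ℝ) = α * m + β * n) (x y : ℝ) {t : ℝ}
    (ht : 0 < t) :
    czAbsIntegrand c p k m x t ^ α * czAbsIntegrand c p k n y t ^ β =
      czAbsIntegrand c p k N (α * x + β * y) t := by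
  unfold czAbsIntegrand
  set a := |log t|
  set e := exp (-(t ^ k) / p - c * p / t ^ k)
  have ha : 0 ≤ a := abs_nonneg _
  have he : 0 ≤ e := (exp_pos _).le
  have htα := rpow_nonneg ht.le (x - 1)
  have htβ := rpow_nonneg ht.le (y - 1)
  rw [mul_rpow (by positivity) he, mul_rpow (by positivity) he, mul_rpow (by positivity) htα,
    mul_rpow (by positivity) htβ, ← rpow_natCast a m, ← rpow_natCast a n, ← rpow_mul ha,
    ← rpow_mul ha, ← rpow_mul ht.le, ← rpow_mul ht.le, ← rpow_natCast a N, hN]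
  calc a ^ (↑m * α) * t ^ ((x - 1) * α) * e ^ α * (a ^ (↑n * β) * t ^ ((y - 1) * β) * e ^ β)
      = (a ^ (↑m * α) * a ^ (↑n * β)) * (t ^ ((x - 1) * α) * t ^ ((y - 1) * β))
          * (e ^ α * e ^ β) := by ring
    _ = a ^ (α * m + β * n) * t ^ (α * x + β * y - 1) * e := by
        have ha_exp : ↑m * α + ↑n * β = α * m + β * n := by ring
        have ht_exp : (x - 1) * α + (y - 1) * β = α * x + β * y - 1 := by
          linear_combination -hαβ
        rw [← rpow_add_of_nonneg ha (by positivity) (by positivity), ← rpow_add ht,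
          ← rpow_add_of_nonneg he hα hβ, ha_exp, ht_exp, hαβ, rpow_one]

lemma czDeriv_le_integral_czAbsIntegrand (c p k : ℝ) (N : ℕ) (z : ℝ) :
    czDeriv c p k N z ≤ ∫ t in Ioi 0, czAbsIntegrand c p k N z t := by
  refine (le_norm_self _).trans ((norm_integral_le_integral_norm _).trans_eq ?_)
  refine setIntegral_congr_fun measurableSet_Ioi fun t ht => ?_
  have := rpow_pos_of_pos (mem_Ioi.mp ht) (z - 1)
  simp only [czAbsIntegrand, norm_mul, norm_pow, Real.norm_eq_abs, abs_of_pos this,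
    abs_of_pos (exp_pos _)]

lemma czDeriv_eq_integral_czAbsIntegrand {c p k : ℝ} {M : ℕ} (hM : Even M) (z : ℝ) :
    czDeriv c p k M z = ∫ t in Ioi 0, czAbsIntegrand c p k M z t := by
  simp only [czDeriv, czAbsIntegrand, hM.pow_abs]

theorem czDeriv_logConvex (c p k α β : ℝ) (hc : 0 < c) (hp : 0 < p) (hk : 0 < k)
    (hα : α ∈ Set.Ioo (0:ℝ) 1) (hβ : β ∈ Set.Ioo (0:ℝ) 1) (hαβ : α + β = 1)
    (m n N : ℕ) (hm : Even m) (hn : Even n) (hN : (N : ℝ) = α * m + β * n)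
    (x y : ℝ) (hx : 0 < x) (hy : 0 < y) :
    czDeriv c p k N (α * x + β * y) ≤
      czDeriv c p k m x ^ α * czDeriv c p k n y ^ β := by
  have hnonneg (M : ℕ) (z : ℝ) : 0 ≤ᵐ[volume.restrict (Ioi 0)] czAbsIntegrand c p k M z :=
    (ae_restrict_iff' measurableSet_Ioi).2 <| .of_forall fun t ht =>
      czAbsIntegrand_nonneg c p k M z (le_of_lt ht)
  calc czDeriv c p k N (α * x + β * y)
      ≤ ∫ t in Ioi 0, czAbsIntegrand c p k N (α * x + β * y) t :=
        czDeriv_le_integral_czAbsIntegrand c p k N _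
    _ = ∫ t in Ioi 0, czAbsIntegrand c p k m x t ^ α * czAbsIntegrand c p k n y t ^ β :=
        setIntegral_congr_fun measurableSet_Ioi fun t ht =>
          (czAbsIntegrand_rpow_mul_rpow c p k hα.1.le hβ.1.le hαβ hN x y ht).symm
    _ ≤ (∫ t in Ioi 0, czAbsIntegrand c p k m x t) ^ α *
          (∫ t in Ioi 0, czAbsIntegrand c p k n y t) ^ β :=
        integral_rpow_mul_rpow_le (hnonneg m x) (hnonneg n y)
          (integrableOn_czAbsIntegrand hc.le hp hk hx m)
          (integrableOn_czAbsIntegrand hc.le hp hk hy n) hα.1.le hβ.1.le hαβ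
    _ = czDeriv c p k m x ^ α * czDeriv c p k n y ^ β := by
        rw [czDeriv_eq_integral_czAbsIntegrand hm, czDeriv_eq_integral_czAbsIntegrand hn]
end
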